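/- arXiv:2605.10766 — 2 statements merged into one kernel-verified Lean document; each statement's English description precedes it below -/
import Mathlib

section
/- Let μ be a complex measure on the strip S_H satisfying the growth bound |μ|({z ∈ S_H : |Re z| ≤ r}) ≤ C₀ max{1, r^ρ} with ρ < m, and let φ be an m-times continuously differentiable compactly supported function on ℝ. Then the integral ∫_{S_H} φ̂^c(z) μ(dz) is absolutely convergent, and for every s ∈ ℝ one has |∫_{S_H} e^{2πisz} φ̂^c(z) μ(dz)| ≤ C₄ e^{2π|s|H}, where C₄ does not depend on s. -/
open MeasureTheory Real Complex Set

/-- The c-Fourier transform `φ̂^c(z) = ∫_ℝ φ(t) e^{-2πizt} dt`. -/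
noncomputable def cFourier (φ : ℝ → ℂ) (z : ℂ) : ℂ :=
  ∫ t : ℝ, φ t * Complex.exp (-2 * Real.pi * Complex.I * z * t)

lemma norm_integrand (φ : ℝ → ℂ) (z : ℂ) (t : ℝ) :
    ‖φ t * Complex.exp (-2 * Real.pi * Complex.I * z * t)‖
      = ‖φ t‖ * Real.exp (2 * Real.pi * t * z.im) := by
  rw [norm_mul, Complex.norm_exp]
  congr 2
  simp [Complex.mul_re, Complex.mul_im]
  ring

lemma integrable_aux (φ : ℝ → ℂ) (hφ : Continuous φ) (hc : HasCompactSupport φ) (z : ℂ) :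
    Integrable (fun t : ℝ => φ t * Complex.exp (-2 * Real.pi * Complex.I * z * t)) := by
  apply Continuous.integrable_of_hasCompactSupport
  · exact hφ.mul (Complex.continuous_exp.comp (by fun_prop))
  · exact hc.mul_right

/-- Basic bound on the strip. -/
lemma cFourier_basic_bound (φ : ℝ → ℂ) (hφ : Continuous φ) (hc : HasCompactSupport φ)
    (R H : ℝ) (hR0 : 0 < R) (hR : ∀ t : ℝ, R < |t| → φ t = 0) (hH : 0 ≤ H)
    (z : ℂ) (hz : |z.im| ≤ H) :
    ‖cFourier φ z‖ ≤ Real.exp (2 * Real.pi * R * H) * ∫ t : ℝ, ‖φ t‖ := by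
  have hint : Integrable (fun t : ℝ => Real.exp (2 * Real.pi * R * H) * ‖φ t‖) :=
    (hφ.norm.integrable_of_hasCompactSupport hc.norm).const_mul _
  calc ‖cFourier φ z‖ ≤ ∫ t : ℝ, Real.exp (2 * Real.pi * R * H) * ‖φ t‖ := by
        apply norm_integral_le_of_norm_le hint
        filter_upwards [] with t
        rw [norm_integrand]
        rcases le_or_gt |t| R with ht | ht
        · rw [mul_comm (Real.exp (2 * Real.pi * R * H))]
          have h1 : t * z.im ≤ |t| * |z.im| :=
            (le_abs_self _).trans (abs_mul _ _).le
          have h3 : 2 * Real.pi * t * z.im ≤ 2 * Real.pi * R * H := by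
            nlinarith [Real.pi_pos, mul_le_mul ht hz (abs_nonneg _) hR0.le]
          exact mul_le_mul_of_nonneg_left (Real.exp_le_exp.2 h3) (norm_nonneg (φ t))
        · rw [hR t ht, norm_zero, zero_mul]
          positivity
    _ = Real.exp (2 * Real.pi * R * H) * ∫ t : ℝ, ‖φ t‖ := integral_const_mul _ _

/-- Integration by parts. -/
lemma cFourier_deriv (φ : ℝ → ℂ) (hφ : ContDiff ℝ 1 φ) (hc : HasCompactSupport φ) (z : ℂ) :
    cFourier (deriv φ) z = (2 * Real.pi * Complex.I * z) * cFourier φ z := by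
  set c : ℂ := -2 * Real.pi * Complex.I * z with hcdef
  set E : ℝ → ℂ := fun t => Complex.exp (c * t) with hEdef
  have hEeq : ∀ t : ℝ, Complex.exp (-2 * Real.pi * Complex.I * z * t) = E t :=
    fun t => rfl
  have hlin : ContDiff ℝ (⊤ : ℕ∞) (fun t : ℝ => c * (t : ℂ)) :=
    contDiff_const.mul Complex.ofRealCLM.contDiff
  have hE : ContDiff ℝ (⊤ : ℕ∞) E := Complex.contDiff_exp.comp hlin
  have hEd : ∀ t : ℝ, HasDerivAt E (c * E t) t := by
    intro t
    have h1 : HasDerivAt (fun t : ℝ => c * (t : ℂ)) c t := by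
      simpa using (Complex.ofRealCLM.hasDerivAt (x := t)).const_mul c
    have h2 := h1.cexp
    rw [mul_comm] at h2
    exact h2
  set F : ℝ → ℂ := fun t => φ t * E t with hFdef
  have hφd : Differentiable ℝ φ := hφ.differentiable one_ne_zero
  have hFd : ∀ t : ℝ, HasDerivAt F (deriv φ t * E t + φ t * (c * E t)) t := by
    intro t
    exact ((hφd t).hasDerivAt).mul (hEd t)
  have hF1 : ContDiff ℝ 1 F := hφ.mul (hE.of_le (mod_cast le_top))
  have hFc : HasCompactSupport F := hc.mul_right
  have hderivF : deriv F = fun t => deriv φ t * E t + φ t * (c * E t) := by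
    funext t; exact (hFd t).deriv
  have hI1 : Integrable (fun t : ℝ => deriv φ t * E t) := by
    have h := integrable_aux (deriv φ) (hφ.continuous_deriv le_rfl) hc.deriv z
    apply h.congr
    filter_upwards [] with t
    rw [hEeq]
  have hI2 : Integrable (fun t : ℝ => φ t * (c * E t)) := by
    have := (integrable_aux φ hφ.continuous hc z).mul_const c
    apply Integrable.congr this
    filter_upwards [] with t
    rw [hEeq]; ring
  have hId : Integrable (deriv F) := by rw [hderivF]; exact hI1.add hI2
  have hzero : ∫ t : ℝ, deriv F t = 0 := by
    rw [← intervalIntegral.integral_Iic_add_Ioi (b := 0) hId.integrableOn hId.integrableOn]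
    rw [HasCompactSupport.integral_Iic_deriv_eq hF1 hFc 0,
        HasCompactSupport.integral_Ioi_deriv_eq hF1 hFc 0]
    ring
  rw [hderivF] at hzero
  rw [integral_add hI1 hI2] at hzero
  have h2 : ∫ t : ℝ, φ t * (c * E t) = c * ∫ t : ℝ, φ t * E t := by
    rw [← integral_const_mul]
    congr 1; funext t; ring
  have hcf1 : cFourier (deriv φ) z = ∫ t : ℝ, deriv φ t * E t := rfl
  have hcf2 : cFourier φ z = ∫ t : ℝ, φ t * E t := rfl
  rw [hcf1, hcf2]
  have : (2 * Real.pi * Complex.I * z : ℂ) = -c := by rw [hcdef]; ring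
  rw [this]
  rw [h2] at hzero
  linear_combination hzero

lemma exists_R (φ : ℝ → ℂ) (hc : HasCompactSupport φ) :
    ∃ R > 0, ∀ t : ℝ, R < |t| → φ t = 0 := by
  obtain ⟨R, hR⟩ := hc.isCompact.isBounded.subset_closedBall 0
  refine ⟨max R 1, by positivity, fun t ht => ?_⟩
  by_contra h
  have : t ∈ tsupport φ := subset_tsupport φ h
  have := hR this
  simp [Metric.mem_closedBall, Real.dist_eq] at this
  have : |t| ≤ max R 1 := le_trans this (le_max_left _ _)
  linarith

lemma cFourier_cont (φ : ℝ → ℂ) (hφ : Continuous φ) (hc : HasCompactSupport φ) :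
    Continuous (cFourier φ) := by
  obtain ⟨R, hR0, hR⟩ := exists_R φ hc
  rw [continuous_iff_continuousAt]
  intro z₀
  apply continuousAt_of_dominated (bound := fun t => ‖φ t‖ * Real.exp (2 * Real.pi * R * (|z₀.im| + 1)))
  · exact Filter.Eventually.of_forall fun z => (integrable_aux φ hφ hc z).aestronglyMeasurable
  · have hev : ∀ᶠ z : ℂ in nhds z₀, |z.im| ≤ |z₀.im| + 1 := by
      have hcont : Continuous fun z : ℂ => |z.im| := continuous_abs.comp Complex.continuous_im
      exact (hcont.tendsto z₀).eventually_le_const (lt_add_one _)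
    filter_upwards [hev] with z hz
    filter_upwards [] with t
    rw [norm_integrand]
    rcases le_or_gt |t| R with ht | ht
    · have h1 : t * z.im ≤ |t| * |z.im| := by
        calc t * z.im ≤ |t * z.im| := le_abs_self _
        _ = |t| * |z.im| := abs_mul _ _
      have h2 : |t| * |z.im| ≤ R * (|z₀.im| + 1) := by
        apply mul_le_mul ht hz (abs_nonneg _) hR0.le
      have h3 : 2 * Real.pi * t * z.im ≤ 2 * Real.pi * R * (|z₀.im| + 1) := by
        nlinarith [Real.pi_pos]
      exact mul_le_mul_of_nonneg_left (Real.exp_le_exp.2 h3) (norm_nonneg _)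
    · rw [hR t ht, norm_zero, zero_mul, zero_mul]
  · exact ((hφ.norm.mul continuous_const).integrable_of_hasCompactSupport (hc.norm.mul_right))
  · exact Filter.Eventually.of_forall fun t =>
      (continuousAt_const.mul (Complex.continuous_exp.continuousAt.comp (by fun_prop)))

lemma hcs_iter (φ : ℝ → ℂ) (hc : HasCompactSupport φ) (n : ℕ) :
    HasCompactSupport (iteratedDeriv n φ) := by
  induction n with
  | zero => simpa using hc
  | succ n ih => rw [iteratedDeriv_succ]; exact ih.deriv

lemma cFourier_iteratedDeriv (φ : ℝ → ℂ) (n : ℕ) (hφ : ContDiff ℝ n φ)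
    (hc : HasCompactSupport φ) (z : ℂ) :
    cFourier (iteratedDeriv n φ) z = (2 * Real.pi * Complex.I * z) ^ n * cFourier φ z := by
  induction n generalizing φ with
  | zero => simp [iteratedDeriv_zero]
  | succ n ih =>
    have hφ' : ContDiff ℝ ((n : WithTop ℕ∞) + 1) φ := by exact_mod_cast hφ
    have hd : ContDiff ℝ n (deriv φ) := (contDiff_succ_iff_deriv.mp hφ').2.2
    have h1 : ContDiff ℝ 1 φ := hφ.of_le (by exact_mod_cast Nat.one_le_iff_ne_zero.mpr (Nat.succ_ne_zero n))
    rw [iteratedDeriv_succ', ih (deriv φ) hd hc.deriv, cFourier_deriv φ h1 hc z, pow_succ]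
    ring

lemma cFourier_decay (H : ℝ) (hH : 0 < H) (m : ℕ) (φ : ℝ → ℂ) (hsm : ContDiff ℝ m φ)
    (hc : HasCompactSupport φ) :
    ∃ C₃ > 0, ∀ z : ℂ, |z.im| ≤ H → ‖cFourier φ z‖ ≤ C₃ / (max 1 |z.re|) ^ m := by
  obtain ⟨R₁, hR₁0, hR₁⟩ := exists_R φ hc
  obtain ⟨R₂, hR₂0, hR₂⟩ := exists_R (iteratedDeriv m φ) (hcs_iter φ hc m)
  set A : ℝ := Real.exp (2 * Real.pi * R₁ * H) * ∫ t : ℝ, ‖φ t‖ with hA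
  set B : ℝ := Real.exp (2 * Real.pi * R₂ * H) * ∫ t : ℝ, ‖iteratedDeriv m φ t‖ with hB
  refine ⟨max A B + 1, by positivity, fun z hz => ?_⟩
  have hφc : Continuous φ := hsm.continuous
  have hbase : (1 : ℝ) ≤ max 1 |z.re| := le_max_left _ _
  have hpow : (0 : ℝ) < (max 1 |z.re|) ^ m := by positivity
  rw [le_div_iff₀ hpow]
  rcases le_or_gt |z.re| 1 with hre | hre
  · have : max 1 |z.re| = 1 := max_eq_left hre
    rw [this, one_pow, mul_one]
    have := cFourier_basic_bound φ hφc hc R₁ H hR₁0 hR₁ hH.le z hz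
    have hA' : A ≤ max A B := le_max_left _ _
    linarith
  · have hmax : max 1 |z.re| = |z.re| := max_eq_right hre.le
    have key := cFourier_iteratedDeriv φ m hsm hc z
    have hBb := cFourier_basic_bound (iteratedDeriv m φ)
      (hsm.continuous_iteratedDeriv m (by exact_mod_cast le_rfl)) (hcs_iter φ hc m)
      R₂ H hR₂0 hR₂ hH.le z hz
    rw [key, norm_mul, norm_pow] at hBb
    have h2 : |z.re| ≤ ‖(2 * Real.pi * Complex.I * z : ℂ)‖ := by
      have h3 : |z.re| ≤ ‖z‖ := Complex.abs_re_le_norm z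
      have h4 : ‖(2 * Real.pi * Complex.I * z : ℂ)‖ = 2 * Real.pi * ‖z‖ := by
        simp [norm_mul, _root_.abs_of_pos Real.pi_pos]
        try ring
      nlinarith [Real.pi_gt_three, norm_nonneg z]
    have h5 : (max 1 |z.re|) ^ m ≤ ‖(2 * Real.pi * Complex.I * z : ℂ)‖ ^ m := by
      rw [hmax]; exact pow_le_pow_left₀ (abs_nonneg _) h2 m
    have h6 : ‖cFourier φ z‖ * (max 1 |z.re|) ^ m ≤ B := by
      calc ‖cFourier φ z‖ * (max 1 |z.re|) ^ m
          ≤ ‖cFourier φ z‖ * ‖(2 * Real.pi * Complex.I * z : ℂ)‖ ^ m := by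
            exact mul_le_mul_of_nonneg_left h5 (norm_nonneg _)
        _ ≤ B := by rw [mul_comm]; exact hBb
    have hB' : B ≤ max A B := le_max_right _ _
    linarith

lemma weight_finite_lintegral (H C₀ ρ : ℝ) (m : ℕ) (hH : 0 < H) (hC₀ : 0 < C₀) (hρm : ρ < m)
    (μvar : Measure ℂ)
    (hsupp : μvar {z : ℂ | H < |z.im|} = 0)
    (hgrow : ∀ r : ℝ, 0 < r →
      μvar {z : ℂ | |z.im| ≤ H ∧ |z.re| ≤ r} ≤ ENNReal.ofReal (C₀ * max 1 (r ^ ρ))) :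
    ∫⁻ z : ℂ, ENNReal.ofReal (((max 1 |z.re|) ^ m)⁻¹) ∂μvar < ⊤ := by
  have hSmeas : MeasurableSet {z : ℂ | |z.im| ≤ H} := by
    have : Continuous fun z : ℂ => |z.im| := continuous_abs.comp Complex.continuous_im
    exact (isClosed_le this continuous_const).measurableSet
  rcases Nat.eq_zero_or_pos m with hm0 | hm1
  · -- m = 0 : the measure is finite
    subst hm0
    have hρ0 : ρ < 0 := by exact_mod_cast hρm
    have hfin : μvar univ < ⊤ := by
      have hsub : (univ : Set ℂ) ⊆ {z : ℂ | H < |z.im|} ∪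
          ⋃ n : ℕ, {z : ℂ | |z.im| ≤ H ∧ |z.re| ≤ (n : ℝ) + 1} := by
        intro z _
        rcases lt_or_ge H |z.im| with h | h
        · exact Or.inl h
        · obtain ⟨n, hn⟩ := exists_nat_ge |z.re|
          exact Or.inr (mem_iUnion.2 ⟨n, h, hn.trans (by linarith)⟩)
      calc μvar univ ≤ μvar ({z : ℂ | H < |z.im|} ∪
            ⋃ n : ℕ, {z : ℂ | |z.im| ≤ H ∧ |z.re| ≤ (n : ℝ) + 1}) := measure_mono hsub
        _ ≤ μvar {z : ℂ | H < |z.im|} +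
            μvar (⋃ n : ℕ, {z : ℂ | |z.im| ≤ H ∧ |z.re| ≤ (n : ℝ) + 1}) := measure_union_le _ _
        _ ≤ 0 + ENNReal.ofReal C₀ := by
            gcongr
            · exact hsupp.le
            · have hdir : Directed (· ⊆ ·)
                  (fun n : ℕ => {z : ℂ | |z.im| ≤ H ∧ |z.re| ≤ (n : ℝ) + 1}) := by
                intro a b
                refine ⟨max a b, fun z hz => ⟨hz.1, hz.2.trans (by push_cast; simp)⟩,
                  fun z hz => ⟨hz.1, hz.2.trans (by push_cast; simp)⟩⟩
              rw [hdir.measure_iUnion]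
              refine iSup_le fun n => (hgrow ((n : ℝ) + 1) (by positivity)).trans ?_
              have h1 : ((n : ℝ) + 1) ^ ρ ≤ 1 :=
                Real.rpow_le_one_of_one_le_of_nonpos (by push_cast; linarith) hρ0.le
              have : max 1 (((n : ℝ) + 1) ^ ρ) = 1 := max_eq_left h1
              rw [this, mul_one]
        _ < ⊤ := by simp
    calc ∫⁻ z : ℂ, ENNReal.ofReal (((max 1 |z.re|) ^ 0)⁻¹) ∂μvar
        = ∫⁻ _ : ℂ, 1 ∂μvar := by simp
      _ = μvar univ := lintegral_one
      _ < ⊤ := hfin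
  · -- m ≥ 1 : dyadic decomposition
    set ρ' : ℝ := max ρ 0 with hρ'def
    have hρ'm : ρ' < m := max_lt hρm (by exact_mod_cast hm1)
    have hρ'0 : 0 ≤ ρ' := le_max_right _ _
    set B : ℕ → Set ℂ := fun k =>
      {z : ℂ | |z.im| ≤ H ∧ (2 : ℝ) ^ k ≤ max 1 |z.re| ∧ |z.re| ≤ 2 ^ (k + 1)} with hBdef
    have hcover : {z : ℂ | |z.im| ≤ H} ⊆ ⋃ k : ℕ, B k := by
      intro z hz
      have hv1 : (1 : ℝ) ≤ max 1 |z.re| := le_max_left _ _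
      have hex : ∃ j : ℕ, max 1 |z.re| < 2 ^ (j + 1) := by
        obtain ⟨n, hn⟩ := pow_unbounded_of_one_lt (max 1 |z.re|) (one_lt_two (α := ℝ))
        exact ⟨n, hn.trans_le (pow_le_pow_right₀ one_le_two (Nat.le_succ n))⟩
      have hk1 : max 1 |z.re| < 2 ^ (Nat.find hex + 1) := Nat.find_spec hex
      have hk0 : (2 : ℝ) ^ (Nat.find hex) ≤ max 1 |z.re| := by
        rcases Nat.eq_zero_or_pos (Nat.find hex) with h0 | h0
        · rw [h0, pow_zero]; exact hv1
        · obtain ⟨j, hj⟩ := Nat.exists_eq_succ_of_ne_zero h0.ne'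
          have hmin := Nat.find_min hex (m := j) (hj ▸ Nat.lt_succ_self j)
          push_neg at hmin
          rw [hj]
          exact hmin
      exact mem_iUnion.2 ⟨Nat.find hex, hz, hk0, le_trans (le_max_right 1 |z.re|) hk1.le⟩
    have hcompl : μvar {z : ℂ | |z.im| ≤ H}ᶜ = 0 := by
      have : {z : ℂ | |z.im| ≤ H}ᶜ = {z : ℂ | H < |z.im|} := by
        ext z; simp [not_le]
      rw [this]; exact hsupp
    set f : ℂ → ENNReal := fun z => ENNReal.ofReal (((max 1 |z.re|) ^ m)⁻¹) with hfdef
    have hsplit : ∫⁻ z : ℂ, f z ∂μvar = ∫⁻ z in {z : ℂ | |z.im| ≤ H}, f z ∂μvar := by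
      rw [← lintegral_add_compl f hSmeas, setLIntegral_measure_zero _ _ hcompl, add_zero]
    rw [hsplit]
    -- bound each dyadic piece
    have hterm : ∀ k : ℕ, ∫⁻ z in B k, f z ∂μvar ≤
        ENNReal.ofReal (C₀ * 2 ^ ρ') * ENNReal.ofReal ((2 : ℝ) ^ (ρ' - m)) ^ k := by
      intro k
      have hpt : ∀ z ∈ B k, f z ≤ ENNReal.ofReal (((2 : ℝ) ^ (k * m))⁻¹) := by
        intro z hz
        rw [hfdef]
        apply ENNReal.ofReal_le_ofReal
        rw [pow_mul]
        apply inv_anti₀ (by positivity)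
        exact pow_le_pow_left₀ (by positivity) hz.2.1 m
      calc ∫⁻ z in B k, f z ∂μvar
          ≤ ∫⁻ _ in B k, ENNReal.ofReal (((2 : ℝ) ^ (k * m))⁻¹) ∂μvar :=
            setLIntegral_mono measurable_const hpt
        _ = ENNReal.ofReal (((2 : ℝ) ^ (k * m))⁻¹) * μvar (B k) := by
            rw [setLIntegral_const]
        _ ≤ ENNReal.ofReal (((2 : ℝ) ^ (k * m))⁻¹) *
              ENNReal.ofReal (C₀ * max 1 (((2 : ℝ) ^ (k + 1)) ^ ρ)) := by
            gcongr
            refine (measure_mono ?_).trans (hgrow ((2 : ℝ) ^ (k + 1)) (by positivity))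
            exact fun z hz => ⟨hz.1, hz.2.2⟩
        _ ≤ ENNReal.ofReal (C₀ * 2 ^ ρ') * ENNReal.ofReal ((2 : ℝ) ^ (ρ' - m)) ^ k := by
            rw [← ENNReal.ofReal_pow (by positivity), ← ENNReal.ofReal_mul (by positivity),
              ← ENNReal.ofReal_mul (by positivity)]
            apply ENNReal.ofReal_le_ofReal
            have hb1 : (1 : ℝ) ≤ (2 : ℝ) ^ (k + 1) := one_le_pow₀ one_le_two
            have hmax : max 1 (((2 : ℝ) ^ (k + 1)) ^ ρ) ≤ ((2 : ℝ) ^ (k + 1)) ^ ρ' := by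
              apply max_le
              · calc (1 : ℝ) = ((2 : ℝ) ^ (k + 1)) ^ (0 : ℝ) := (Real.rpow_zero _).symm
                  _ ≤ ((2 : ℝ) ^ (k + 1)) ^ ρ' :=
                    Real.rpow_le_rpow_of_exponent_le hb1 hρ'0
              · exact Real.rpow_le_rpow_of_exponent_le hb1 (le_max_left _ _)
            have heq : ((2 : ℝ) ^ (k + 1)) ^ ρ' = (2 : ℝ) ^ ((((k + 1) : ℕ) : ℝ) * ρ') := by
              rw [← Real.rpow_natCast 2 (k + 1), ← Real.rpow_mul (by norm_num)]
            have heq2 : (((2 : ℝ) ^ (k * m))⁻¹ : ℝ) = (2 : ℝ) ^ (-(((k * m : ℕ)) : ℝ)) := by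
              rw [← Real.rpow_natCast 2 (k * m), ← Real.rpow_neg (by norm_num)]
            have heq3 : ((2 : ℝ) ^ (ρ' - m)) ^ k = (2 : ℝ) ^ ((ρ' - m) * k) := by
              rw [← Real.rpow_natCast ((2:ℝ) ^ (ρ' - (m:ℝ))) k, ← Real.rpow_mul (by norm_num)]
            calc ((2 : ℝ) ^ (k * m))⁻¹ * (C₀ * max 1 (((2 : ℝ) ^ (k + 1)) ^ ρ))
                ≤ ((2 : ℝ) ^ (k * m))⁻¹ * (C₀ * ((2 : ℝ) ^ (k + 1)) ^ ρ') := by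
                  have h0 : (0:ℝ) < ((2 : ℝ) ^ (k * m))⁻¹ := by positivity
                  have := mul_le_mul_of_nonneg_left hmax hC₀.le
                  nlinarith
              _ = C₀ * 2 ^ ρ' * ((2 : ℝ) ^ (ρ' - m)) ^ k := by
                  rw [heq, heq2, heq3]
                  rw [show C₀ * (2:ℝ) ^ ρ' * (2:ℝ) ^ ((ρ' - (m:ℝ)) * k)
                      = C₀ * ((2:ℝ) ^ ρ' * (2:ℝ) ^ ((ρ' - (m:ℝ)) * k)) from by ring,
                    ← Real.rpow_add two_pos]
                  rw [show (2:ℝ) ^ (-(((k * m : ℕ)) : ℝ)) * (C₀ * (2:ℝ) ^ ((((k + 1) : ℕ) : ℝ) * ρ'))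
                      = C₀ * ((2:ℝ) ^ (-(((k * m : ℕ)) : ℝ)) * (2:ℝ) ^ ((((k + 1) : ℕ) : ℝ) * ρ')) from by ring,
                    ← Real.rpow_add two_pos]
                  congr 1
                  push_cast
                  ring
    have hr1 : ENNReal.ofReal ((2 : ℝ) ^ (ρ' - m)) < 1 := by
      rw [ENNReal.ofReal_lt_one]
      exact Real.rpow_lt_one_of_one_lt_of_neg one_lt_two (by linarith)
    calc ∫⁻ z in {z : ℂ | |z.im| ≤ H}, f z ∂μvar
        ≤ ∫⁻ z in ⋃ k : ℕ, B k, f z ∂μvar := lintegral_mono_set hcover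
      _ ≤ ∑' k : ℕ, ∫⁻ z in B k, f z ∂μvar := lintegral_iUnion_le _ _
      _ ≤ ∑' k : ℕ, ENNReal.ofReal (C₀ * 2 ^ ρ') * ENNReal.ofReal ((2 : ℝ) ^ (ρ' - m)) ^ k :=
          ENNReal.tsum_le_tsum hterm
      _ = ENNReal.ofReal (C₀ * 2 ^ ρ') * ∑' k : ℕ, ENNReal.ofReal ((2 : ℝ) ^ (ρ' - m)) ^ k :=
          ENNReal.tsum_mul_left
      _ = ENNReal.ofReal (C₀ * 2 ^ ρ') * (1 - ENNReal.ofReal ((2 : ℝ) ^ (ρ' - m)))⁻¹ := by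
          rw [ENNReal.tsum_geometric]
      _ < ⊤ := by
          apply ENNReal.mul_lt_top ENNReal.ofReal_lt_top
          rw [ENNReal.inv_lt_top]
          exact tsub_pos_of_lt hr1


/-- let `μ` be a complex measure on the strip `S_H`, given in polar form
`dμ = g d|μ|` with `|g| = 1` and `|μ| = μvar`, satisfying the growth bound
`|μ|({z ∈ S_H : |Re z| ≤ r}) ≤ C₀ max{1, r^ρ}` with `ρ < m`, and let `φ` be an `m`-times
continuously differentiable compactly supported function.  Then `∫ φ̂^c dμ` converges
absolutely, and `|∫ e^{2πisz} φ̂^c(z) μ(dz)| ≤ C₄ e^{2π|s|H}` with `C₄` independent of `s`. -/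
theorem stmt5 (H C₀ ρ : ℝ) (m : ℕ) (hH : 0 < H) (hC₀ : 0 < C₀) (hρm : ρ < m)
    (μvar : Measure ℂ) (g : ℂ → ℂ) (hg : ∀ z, ‖g z‖ = 1)
    (hgm : Measurable g)
    (hsupp : μvar {z : ℂ | H < |z.im|} = 0)
    (hgrow : ∀ r : ℝ, 0 < r →
      μvar {z : ℂ | |z.im| ≤ H ∧ |z.re| ≤ r} ≤ ENNReal.ofReal (C₀ * max 1 (r ^ ρ)))
    (φ : ℝ → ℂ) (hsm : ContDiff ℝ m φ) (hc : HasCompactSupport φ) :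
    Integrable (fun z => cFourier φ z * g z) μvar ∧
    (∀ s : ℝ, Integrable
      (fun z => Complex.exp (2 * Real.pi * Complex.I * s * z) * cFourier φ z * g z) μvar) ∧
    ∃ C₄ : ℝ, 0 < C₄ ∧ ∀ s : ℝ,
      ‖∫ z, Complex.exp (2 * Real.pi * Complex.I * s * z) * cFourier φ z * g z ∂μvar‖
        ≤ C₄ * Real.exp (2 * Real.pi * |s| * H) := by
  obtain ⟨C₃, hC₃, hdecay⟩ := cFourier_decay H hH m φ hsm hc
  set w : ℂ → ℝ := fun z => C₃ * ((max 1 |z.re|) ^ m)⁻¹ with hwdef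
  have hw_nonneg : ∀ z, 0 ≤ w z := fun z => by positivity
  have hw_cont : Continuous w := by
    apply continuous_const.mul
    apply Continuous.inv₀
    · exact (continuous_const.max (continuous_abs.comp Complex.continuous_re)).pow m
    · intro z
      positivity
  have hw_int : Integrable w μvar := by
    refine ⟨hw_cont.aestronglyMeasurable, ?_⟩
    rw [hasFiniteIntegral_iff_ofReal (Filter.Eventually.of_forall hw_nonneg)]
    calc ∫⁻ z, ENNReal.ofReal (w z) ∂μvar
        = ∫⁻ z, ENNReal.ofReal C₃ * ENNReal.ofReal (((max 1 |z.re|) ^ m)⁻¹) ∂μvar := by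
          congr 1; funext z
          rw [← ENNReal.ofReal_mul hC₃.le]
      _ = ENNReal.ofReal C₃ * ∫⁻ z, ENNReal.ofReal (((max 1 |z.re|) ^ m)⁻¹) ∂μvar :=
          lintegral_const_mul' _ _ ENNReal.ofReal_ne_top
      _ < ⊤ := ENNReal.mul_lt_top ENNReal.ofReal_lt_top
          (weight_finite_lintegral H C₀ ρ m hH hC₀ hρm μvar hsupp hgrow)
  have hae : ∀ᵐ z ∂μvar, |z.im| ≤ H := by
    rw [ae_iff]
    have : {z : ℂ | ¬|z.im| ≤ H} = {z : ℂ | H < |z.im|} := by ext z; simp [not_le]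
    rw [this]; exact hsupp
  have hdw : ∀ z : ℂ, |z.im| ≤ H → ‖cFourier φ z‖ ≤ w z := by
    intro z hz
    rw [hwdef]
    calc ‖cFourier φ z‖ ≤ C₃ / (max 1 |z.re|) ^ m := hdecay z hz
      _ = C₃ * ((max 1 |z.re|) ^ m)⁻¹ := div_eq_mul_inv _ _
  have hcF_cont : Continuous (cFourier φ) := cFourier_cont φ hsm.continuous hc
  have hint1 : Integrable (fun z => cFourier φ z * g z) μvar := by
    apply Integrable.mono' hw_int
      (hcF_cont.aestronglyMeasurable.mul hgm.aestronglyMeasurable)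
    filter_upwards [hae] with z hz
    simp only [Pi.mul_apply]
    rw [norm_mul, hg z, mul_one]
    exact hdw z hz
  have hexp_norm : ∀ s : ℝ, ∀ z : ℂ, |z.im| ≤ H →
      ‖Complex.exp (2 * Real.pi * Complex.I * s * z)‖ ≤ Real.exp (2 * Real.pi * |s| * H) := by
    intro s z hz
    rw [Complex.norm_exp]
    apply Real.exp_le_exp.2
    have hre : (2 * (Real.pi : ℂ) * Complex.I * s * z).re = -(2 * Real.pi * s * z.im) := by
      simp [Complex.mul_re, Complex.mul_im]
      try ring
    rw [hre]
    have h1 : -(s * z.im) ≤ |s * z.im| := neg_le_abs _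
    have h2 : |s * z.im| = |s| * |z.im| := abs_mul _ _
    have h3 : |s| * |z.im| ≤ |s| * H := mul_le_mul_of_nonneg_left hz (abs_nonneg s)
    nlinarith [Real.pi_pos]
  have hexp_cont : ∀ s : ℝ,
      Continuous fun z : ℂ => Complex.exp (2 * Real.pi * Complex.I * s * z) :=
    fun s => Complex.continuous_exp.comp (by fun_prop)
  have hint2 : ∀ s : ℝ, Integrable
      (fun z => Complex.exp (2 * Real.pi * Complex.I * s * z) * cFourier φ z * g z) μvar := by
    intro s
    apply Integrable.mono' (hw_int.const_mul (Real.exp (2 * Real.pi * |s| * H)))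
      (((hexp_cont s).mul hcF_cont).aestronglyMeasurable.mul hgm.aestronglyMeasurable)
    filter_upwards [hae] with z hz
    simp only [Pi.mul_apply]
    rw [norm_mul, norm_mul, hg z, mul_one]
    exact mul_le_mul (hexp_norm s z hz) (hdw z hz) (norm_nonneg _) (Real.exp_nonneg _)
  refine ⟨hint1, hint2, (∫ z, w z ∂μvar) + 1, ?_, fun s => ?_⟩
  · have : 0 ≤ ∫ z, w z ∂μvar := integral_nonneg hw_nonneg
    linarith
  · calc ‖∫ z, Complex.exp (2 * Real.pi * Complex.I * s * z) * cFourier φ z * g z ∂μvar‖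
        ≤ ∫ z, Real.exp (2 * Real.pi * |s| * H) * w z ∂μvar := by
          apply norm_integral_le_of_norm_le (hw_int.const_mul _)
          filter_upwards [hae] with z hz
          rw [norm_mul, norm_mul, hg z, mul_one]
          exact mul_le_mul (hexp_norm s z hz) (hdw z hz) (norm_nonneg _) (Real.exp_nonneg _)
      _ = Real.exp (2 * Real.pi * |s| * H) * ∫ z, w z ∂μvar := integral_const_mul _ _
      _ ≤ Real.exp (2 * Real.pi * |s| * H) * ((∫ z, w z ∂μvar) + 1) := by
          apply mul_le_mul_of_nonneg_left (by linarith) (Real.exp_nonneg _)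
      _ = ((∫ z, w z ∂μvar) + 1) * Real.exp (2 * Real.pi * |s| * H) := mul_comm _ _
end

section
/- The c-Fourier transform of the measure μ₀ = Σ_{n∈ℤ} δ_{n+i} supported on the strip {|Im z| ≤ 1} is the pure point measure μ̂₀^c = Σ_{n∈ℤ} e^{2πn} δ_n on ℝ; in particular μ̂₀^c is not translation bounded and log μ̂₀^c(−r, r) ∼ 2πr as r → ∞. -/
open MeasureTheory Real Complex Set Filter
open FourierTransform Asymptotics

/-- The measure `μ₀ = Σ_{n∈ℤ} δ_{n+i}` on ℂ. -/
noncomputable def mu0 : Measure ℂ :=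
  Measure.sum (fun n : ℤ => Measure.dirac ((n : ℂ) + Complex.I))

/-- The measure `Σ_{n∈ℤ} e^{2πn} δ_n` on ℝ. -/
noncomputable def nu0 : Measure ℝ :=
  Measure.sum (fun n : ℤ =>
    ENNReal.ofReal (Real.exp (2 * Real.pi * n)) • Measure.dirac (n : ℝ))

lemma measurable_indicator_countable {S : Set ℂ} (hS : S.Countable) (f : ℂ → ℂ) :
    Measurable (S.indicator f) := by
  intro s _
  by_cases h0 : (0:ℂ) ∈ s
  · have h : S.indicator f ⁻¹' s = (S ∩ S.indicator f ⁻¹' s) ∪ Sᶜ := by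
      ext z; by_cases hz : z ∈ S <;>
        simp [Set.indicator_of_mem, Set.indicator_of_notMem, hz, h0]
    rw [h]
    exact ((hS.mono inter_subset_left).measurableSet).union hS.measurableSet.compl
  · have h : S.indicator f ⁻¹' s = (S ∩ S.indicator f ⁻¹' s) := by
      ext z; by_cases hz : z ∈ S <;>
        simp [Set.indicator_of_mem, Set.indicator_of_notMem, hz, h0]
    rw [h]
    exact (hS.mono inter_subset_left).measurableSet

lemma stmt12_FbigO (ψ : ℝ → ℂ) (hψc : ContDiff ℝ (⊤ : ℕ∞) ψ) (hψs : HasCompactSupport ψ) :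
    (𝓕 ψ) =O[cocompact ℝ] (|·| ^ (-(2:ℝ))) := by
  have hψc' : ContDiff ℝ ((⊤:ℕ∞) : WithTop ℕ∞) ψ := hψc.of_le (by simp)
  have h'f : ∀ (k n : ℕ), (k:ℕ∞) ≤ (⊤:ℕ∞) → (n:ℕ∞) ≤ (⊤:ℕ∞) →
      Integrable (fun v : ℝ => ‖v‖^k * ‖iteratedFDeriv ℝ n ψ v‖) := by
    intro k n _ _
    apply Continuous.integrable_of_hasCompactSupport
    · exact ((continuous_norm).pow k).mul ((hψc.continuous_iteratedFDeriv (by exact_mod_cast le_top)).norm)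
    · exact ((hψs.iteratedFDeriv n).norm).mul_left
  have hbound : ∀ w : ℝ, ‖w‖ ^ 2 * ‖𝓕 ψ w‖ ≤
      2 ^ 2 * ∑ x ∈ Finset.range 3, ∫ (v : ℝ), ‖iteratedFDeriv ℝ x ψ v‖ := by
    intro w
    have := Real.pow_mul_norm_iteratedFDeriv_fourier_le
      hψc' h'f (k := 0) (n := 2) le_top le_top w
    simpa [norm_iteratedFDeriv_zero] using this
  set B : ℝ := 2 ^ 2 * ∑ x ∈ Finset.range 3, ∫ (v : ℝ), ‖iteratedFDeriv ℝ x ψ v‖ with hB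
  apply Asymptotics.IsBigO.of_bound B
  filter_upwards [tendsto_norm_cocompact_atTop.eventually_ge_atTop 1] with x hx
  rw [Real.norm_eq_abs] at hx
  have hx0 : x ≠ 0 := by intro h; rw [h] at hx; simp at hx; linarith
  have hx2 : (0:ℝ) < |x|^2 := by positivity
  have h2 : |x| ^ (-(2:ℝ)) = (|x|^2)⁻¹ := by
    rw [Real.rpow_neg (abs_nonneg x), ← Real.rpow_natCast |x| 2]
    norm_num
  have hb := hbound x
  rw [Real.norm_eq_abs] at hb
  rw [Real.norm_eq_abs ((|x|:ℝ) ^ (-(2:ℝ))), h2,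
    _root_.abs_of_nonneg (inv_nonneg.2 hx2.le)]
  calc ‖𝓕 ψ x‖ = (|x|^2 * ‖𝓕 ψ x‖) * (|x|^2)⁻¹ := by field_simp
    _ ≤ B * (|x|^2)⁻¹ := by gcongr

lemma stmt12_part1 (φ : ℝ → ℂ) (hφ : ContDiff ℝ (⊤ : ℕ∞) φ) (hc : HasCompactSupport φ) :
    ∫ z, cFourier φ z ∂mu0
      = ∑' n : ℤ, (Real.exp (2 * Real.pi * n) : ℂ) * φ n := by
  set ψ : ℝ → ℂ := fun t => φ t * Complex.exp (2 * π * t) with hψ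
  have hψc : ContDiff ℝ (⊤ : ℕ∞) ψ :=
    hφ.mul (Complex.contDiff_exp.comp (contDiff_const.mul Complex.ofRealCLM.contDiff))
  have hψs : HasCompactSupport ψ := hc.mul_right
  have key : ∀ n : ℤ, cFourier φ ((n:ℂ) + Complex.I) = 𝓕 ψ n := by
    intro n
    rw [Real.fourier_real_eq_integral_exp_smul, cFourier]
    congr 1
    ext t
    rw [smul_eq_mul]
    have h : (-2*(π:ℂ)*Complex.I*((n:ℂ)+Complex.I)*(t:ℂ))
        = (↑(-2 * π * t * n) : ℂ) * Complex.I + (2*π*t : ℂ) := by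
      push_cast
      linear_combination (-2*(π:ℂ)*t) * Complex.I_sq
    rw [h, Complex.exp_add]
    ring
  -- big O facts
  have hFbigO := stmt12_FbigO ψ hψc hψs
  have hψbigO : ψ =O[cocompact ℝ] (|·| ^ (-(2:ℝ))) := by
    apply Asymptotics.IsBigO.of_bound 0
    have hmem : (tsupport ψ)ᶜ ∈ cocompact ℝ :=
      Filter.mem_cocompact.2 ⟨tsupport ψ, hψs, subset_rfl⟩
    filter_upwards [hmem] with x hx
    rw [image_eq_zero_of_notMem_tsupport hx]
    simp
  have hsum : Summable fun n : ℤ => ‖𝓕 ψ n‖ :=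
    summable_of_isBigO (Real.summable_abs_int_rpow one_lt_two)
      (hFbigO.norm_left.comp_tendsto Int.tendsto_coe_cofinite)
  -- integrability
  set S : Set ℂ := Set.range (fun n : ℤ => (n:ℂ) + Complex.I) with hSdef
  have hS : S.Countable := Set.countable_range _
  have hnull : mu0 Sᶜ = 0 := by
    rw [mu0, Measure.sum_apply _ hS.measurableSet.compl]
    have h2 : ∀ n : ℤ, Measure.dirac ((n:ℂ) + Complex.I) Sᶜ = 0 := by
      intro n
      rw [Measure.dirac_apply]
      apply Set.indicator_of_notMem
      simp only [Set.mem_compl_iff, not_not]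
      exact ⟨n, rfl⟩
    simp [h2]
  have hae : cFourier φ =ᵐ[mu0] S.indicator (cFourier φ) := by
    apply measure_mono_null _ hnull
    intro z hz
    simp only [Set.mem_compl_iff]
    intro hzS
    exact hz (by simp [Set.indicator_of_mem hzS])
  have hint : Integrable (cFourier φ) mu0 := by
    constructor
    · exact ⟨S.indicator (cFourier φ),
        (measurable_indicator_countable hS _).stronglyMeasurable, hae⟩
    · rw [HasFiniteIntegral, mu0, lintegral_sum_measure]
      simp only [lintegral_dirac]
      have h1 : ∀ n : ℤ, (‖cFourier φ ((n:ℂ) + Complex.I)‖₊ : ENNReal) = (‖𝓕 ψ n‖₊ : ENNReal) := by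
        intro n; rw [key n]
      simp only [enorm_eq_nnnorm]
      rw [tsum_congr h1, lt_top_iff_ne_top, ENNReal.tsum_coe_ne_top_iff_summable]
      rw [← NNReal.summable_coe]
      simpa [coe_nnnorm] using hsum
  -- compute the integral
  have hI : ∫ z, cFourier φ z ∂mu0 = ∑' n : ℤ, 𝓕 ψ n := by
    rw [mu0] at hint ⊢
    rw [integral_sum_measure hint]
    simp only [integral_dirac]
    exact tsum_congr key
  -- Poisson summation
  have hP := Real.tsum_eq_tsum_fourier_of_rpow_decay hψc.continuous one_lt_two
    hψbigO hFbigO 0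
  have h0 : ((0:ℝ) : UnitAddCircle) = 0 := by norm_num
  simp only [zero_add, h0, fourier_eval_zero, mul_one] at hP
  rw [hI, ← hP]
  apply tsum_congr
  intro n
  rw [hψ]
  simp only
  rw [Complex.ofReal_exp]
  push_cast
  ring

lemma stmt12_part2 : ¬ ∃ C : ℝ, ∀ s : ℝ, nu0 (Set.Icc s (s + 1)) ≤ ENNReal.ofReal C := by
  rintro ⟨C, hC⟩
  set n : ℕ := ⌈C⌉₊ with hn
  have h1 : C < Real.exp (2 * π * n) := by
    have h2 : C ≤ (n : ℝ) := Nat.le_ceil C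
    have h3 : (n:ℝ) + 1 ≤ Real.exp (n:ℝ) := Real.add_one_le_exp n
    have h4 : Real.exp (n:ℝ) ≤ Real.exp (2 * π * n) := by
      apply Real.exp_le_exp.2
      nlinarith [Real.pi_gt_three, (Nat.cast_nonneg n : (0:ℝ) ≤ n)]
    linarith
  have h3 : ENNReal.ofReal (Real.exp (2 * π * ((n:ℤ):ℝ))) ≤ nu0 (Set.Icc (n:ℝ) ((n:ℝ) + 1)) := by
    have hle := Measure.le_sum
      (fun m : ℤ => ENNReal.ofReal (Real.exp (2 * Real.pi * m)) • Measure.dirac (m : ℝ)) (n:ℤ)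
    have happ := hle (Set.Icc (n:ℝ) ((n:ℝ) + 1))
    rw [Measure.smul_apply, Measure.dirac_apply, smul_eq_mul] at happ
    have hmem : ((n:ℤ):ℝ) ∈ Set.Icc (n:ℝ) ((n:ℝ)+1) := by
      constructor <;> push_cast <;> linarith
    rw [Set.indicator_of_mem hmem] at happ
    simp only [Pi.one_apply, mul_one] at happ
    exact happ
  have h4 := le_trans h3 (hC (n:ℝ))
  rw [ENNReal.ofReal_le_ofReal_iff' ] at h4
  push_cast at h4
  rcases h4 with h | h
  · linarith
  · linarith [Real.exp_pos (2 * π * (n:ℝ))]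

lemma stmt12_nu0_apply {A : Set ℝ} (hA : MeasurableSet A) :
    nu0 A = ∑' n : ℤ, ENNReal.ofReal (Real.exp (2 * π * n))
      * A.indicator (1 : ℝ → ENNReal) n := by
  rw [nu0, Measure.sum_apply _ hA]
  congr 1
  ext n
  rw [Measure.smul_apply, Measure.dirac_apply, smul_eq_mul]

lemma stmt12_nu0_upper (r : ℝ) (hr : 2 ≤ r) :
    nu0 (Set.Ioo (-r) r)
      ≤ ENNReal.ofReal (Real.exp (2*π*r) * (1 - Real.exp (-(2*π)))⁻¹) := by
  set M : ℤ := ⌈r⌉ - 1 with hM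
  have hc1 : ((⌈r⌉ : ℤ) : ℝ) < r + 1 := Int.ceil_lt_add_one r
  have hc2 : r ≤ ((⌈r⌉ : ℤ) : ℝ) := Int.le_ceil r
  have hMr : (M:ℝ) < r := by rw [hM]; push_cast; linarith
  have hrM : r - 1 ≤ (M:ℝ) := by rw [hM]; push_cast; linarith
  set g : ℤ → ENNReal := fun n => ENNReal.ofReal (Real.exp (2 * π * n))
      * (Set.Ioo (-r) r).indicator (1 : ℝ → ENNReal) n with hg
  have happ : nu0 (Set.Ioo (-r) r) = ∑' n : ℤ, g n := stmt12_nu0_apply measurableSet_Ioo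
  have hinj : Function.Injective (fun k : ℕ => M - (k:ℤ)) := by
    intro a b h
    simp only at h
    omega
  have hsupp : Function.support g ⊆ Set.range (fun k : ℕ => M - (k:ℤ)) := by
    intro n hn
    have h2 : (n:ℝ) ∈ Set.Ioo (-r) r := by
      by_contra h
      apply hn
      rw [hg]
      simp only [Set.indicator_of_notMem h, mul_zero]
    have h4 : n < ⌈r⌉ := Int.lt_ceil.2 h2.2
    have h3 : n ≤ M := by omega
    exact ⟨(M - n).toNat, by simp only; omega⟩
  have hle : Real.exp (-(2*π)) < 1 := Real.exp_lt_one_iff.2 (by linarith [Real.pi_pos])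
  calc nu0 (Set.Ioo (-r) r) = ∑' n : ℤ, g n := happ
    _ = ∑' k : ℕ, g (M - k) := (hinj.tsum_eq hsupp).symm
    _ ≤ ∑' k : ℕ, ENNReal.ofReal (Real.exp (2*π*r) * Real.exp (-(2*π))^k) := by
        apply ENNReal.tsum_le_tsum
        intro k
        rw [hg]
        simp only
        calc ENNReal.ofReal (Real.exp (2 * π * ((M - k : ℤ) : ℝ)))
              * (Set.Ioo (-r) r).indicator (1 : ℝ → ENNReal) ((M - k : ℤ) : ℝ)
            ≤ ENNReal.ofReal (Real.exp (2 * π * ((M - k : ℤ) : ℝ))) * 1 := by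
              gcongr
              by_cases h : ((M - k : ℤ) : ℝ) ∈ Set.Ioo (-r) r
              · rw [Set.indicator_of_mem h]; simp
              · rw [Set.indicator_of_notMem h]; exact zero_le_one
          _ ≤ ENNReal.ofReal (Real.exp (2*π*r) * Real.exp (-(2*π))^k) := by
              rw [mul_one]
              apply ENNReal.ofReal_le_ofReal
              rw [← Real.exp_nat_mul, ← Real.exp_add]
              apply Real.exp_le_exp.2
              push_cast
              nlinarith [Real.pi_pos]
    _ = ENNReal.ofReal (∑' k : ℕ, Real.exp (2*π*r) * Real.exp (-(2*π))^k) := by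
        rw [ENNReal.ofReal_tsum_of_nonneg]
        · intro k; positivity
        · exact (summable_geometric_of_lt_one (by positivity) hle).mul_left _
    _ = ENNReal.ofReal (Real.exp (2*π*r) * (1 - Real.exp (-(2*π)))⁻¹) := by
        rw [tsum_mul_left, tsum_geometric_of_lt_one (by positivity) hle]

lemma stmt12_nu0_lower (r : ℝ) (hr : 2 ≤ r) :
    ENNReal.ofReal (Real.exp (2*π*(r-1))) ≤ nu0 (Set.Ioo (-r) r) := by
  set M : ℤ := ⌈r⌉ - 1 with hM
  have hc1 : ((⌈r⌉ : ℤ) : ℝ) < r + 1 := Int.ceil_lt_add_one r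
  have hc2 : r ≤ ((⌈r⌉ : ℤ) : ℝ) := Int.le_ceil r
  have hMr : (M:ℝ) < r := by rw [hM]; push_cast; linarith
  have hrM : r - 1 ≤ (M:ℝ) := by rw [hM]; push_cast; linarith
  have happ := stmt12_nu0_apply (A := Set.Ioo (-r) r) measurableSet_Ioo
  rw [happ]
  have hmem : ((M:ℤ):ℝ) ∈ Set.Ioo (-r) r := by
    constructor
    · linarith
    · exact hMr
  calc ENNReal.ofReal (Real.exp (2*π*(r-1)))
      ≤ ENNReal.ofReal (Real.exp (2*π*M)) := by
        apply ENNReal.ofReal_le_ofReal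
        apply Real.exp_le_exp.2
        nlinarith [Real.pi_pos]
    _ = ENNReal.ofReal (Real.exp (2 * π * M))
          * (Set.Ioo (-r) r).indicator (1 : ℝ → ENNReal) ((M:ℤ):ℝ) := by
        rw [Set.indicator_of_mem hmem]
        simp
    _ ≤ ∑' n : ℤ, ENNReal.ofReal (Real.exp (2 * π * n))
          * (Set.Ioo (-r) r).indicator (1 : ℝ → ENNReal) n := ENNReal.le_tsum M

lemma stmt12_part3 : Tendsto (fun r : ℝ =>
    Real.log (nu0 (Set.Ioo (-r) r)).toReal / (2 * Real.pi * r)) atTop (nhds 1) := by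
  set c0 : ℝ := (1 - Real.exp (-(2*π)))⁻¹ with hc0def
  have hle : Real.exp (-(2*π)) < 1 := Real.exp_lt_one_iff.2 (by linarith [Real.pi_pos])
  have hc0 : 0 < c0 := inv_pos.2 (by linarith)
  have hbounds : ∀ r : ℝ, 2 ≤ r →
      2*π*(r-1) ≤ Real.log (nu0 (Set.Ioo (-r) r)).toReal ∧
      Real.log (nu0 (Set.Ioo (-r) r)).toReal ≤ 2*π*r + Real.log c0 := by
    intro r hr
    have hu := stmt12_nu0_upper r hr
    have hl := stmt12_nu0_lower r hr
    have hne : nu0 (Set.Ioo (-r) r) ≠ ⊤ := ne_top_of_le_ne_top ENNReal.ofReal_ne_top hu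
    set T := (nu0 (Set.Ioo (-r) r)).toReal with hT
    have hTl : Real.exp (2*π*(r-1)) ≤ T := (ENNReal.ofReal_le_iff_le_toReal hne).1 hl
    have hTu : T ≤ Real.exp (2*π*r) * c0 :=
      ENNReal.toReal_le_of_le_ofReal (by positivity) hu
    have hT0 : 0 < T := lt_of_lt_of_le (Real.exp_pos _) hTl
    constructor
    · calc 2*π*(r-1) = Real.log (Real.exp (2*π*(r-1))) := (Real.log_exp _).symm
        _ ≤ Real.log T := Real.log_le_log (Real.exp_pos _) hTl
    · calc Real.log T ≤ Real.log (Real.exp (2*π*r) * c0) := Real.log_le_log hT0 hTu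
        _ = 2*π*r + Real.log c0 := by
            rw [Real.log_mul (Real.exp_ne_zero _) (ne_of_gt hc0), Real.log_exp]
  have hg : Tendsto (fun r : ℝ => 1 - r⁻¹) atTop (nhds 1) := by
    have := tendsto_const_nhds.sub tendsto_inv_atTop_zero (f := fun _ : ℝ => (1:ℝ))
    simpa using this
  have hh : Tendsto (fun r : ℝ => 1 + Real.log c0 / (2*π*r)) atTop (nhds 1) := by
    have h2 : (fun r : ℝ => Real.log c0 / (2*π*r))
        = fun r : ℝ => (Real.log c0 / (2*π)) * r⁻¹ := by
      funext r
      rw [div_eq_mul_inv, div_eq_mul_inv, mul_inv]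
      ring
    have h3 : Tendsto (fun r : ℝ => Real.log c0 / (2*π*r)) atTop (nhds 0) := by
      rw [h2]
      simpa using tendsto_inv_atTop_zero.const_mul (Real.log c0 / (2*π))
    have := tendsto_const_nhds.add h3 (f := fun _ : ℝ => (1:ℝ))
    simpa using this
  apply tendsto_of_tendsto_of_tendsto_of_le_of_le' hg hh
  · filter_upwards [eventually_ge_atTop (2:ℝ)] with r hr
    have hb := (hbounds r hr).1
    have hr0 : (0:ℝ) < r := by linarith
    have h2π : (0:ℝ) < 2*π*r := by positivity
    calc 1 - r⁻¹ = (2*π*(r-1)) / (2*π*r) := by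
          rw [eq_div_iff (ne_of_gt h2π)]
          field_simp
      _ ≤ Real.log (nu0 (Set.Ioo (-r) r)).toReal / (2*π*r) := by gcongr
  · filter_upwards [eventually_ge_atTop (2:ℝ)] with r hr
    have hb := (hbounds r hr).2
    have hr0 : (0:ℝ) < r := by linarith
    have h2π : (0:ℝ) < 2*π*r := by positivity
    calc Real.log (nu0 (Set.Ioo (-r) r)).toReal / (2*π*r)
        ≤ (2*π*r + Real.log c0) / (2*π*r) := by gcongr
      _ = 1 + Real.log c0 / (2*π*r) := by
          rw [add_div, div_self (ne_of_gt h2π)]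


/-- the c-Fourier transform of `μ₀ = Σ_{n∈ℤ} δ_{n+i}` is the pure point
measure `Σ_{n∈ℤ} e^{2πn} δ_n`, i.e. `∫ φ̂^c dμ₀ = Σ_n e^{2πn} φ(n)` for every test
function `φ`; in particular this measure is not translation bounded and
`log ν(-r,r) ∼ 2πr` as `r → ∞`. -/
theorem stmt12 :
    (∀ φ : ℝ → ℂ, ContDiff ℝ (⊤ : ℕ∞) φ → HasCompactSupport φ →
      ∫ z, cFourier φ z ∂mu0
        = ∑' n : ℤ, (Real.exp (2 * Real.pi * n) : ℂ) * φ n) ∧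
    (¬ ∃ C : ℝ, ∀ s : ℝ, nu0 (Set.Icc s (s + 1)) ≤ ENNReal.ofReal C) ∧
    Tendsto (fun r : ℝ =>
      Real.log (nu0 (Set.Ioo (-r) r)).toReal / (2 * Real.pi * r)) atTop (nhds 1) := by
  exact ⟨stmt12_part1, stmt12_part2, stmt12_part3⟩
end
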